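/- For every real z > 0, ∫₀^∞ K₁( 2z cosh(t) ) dt = (1/2) K_{1/2}(z)², and this common value equals (π/(4z)) e^{−2z}. -/

import Mathlib

/-!
Since `cosh` is even, `K_ν(z) = ½ ∫_ℝ e^{-z cosh a + ν a} da`, so `K_μ(z) K_ν(z)` is a double
integral over `ℝ²`. The substitution `a = t + s`, `b = t - s` turns `cosh a + cosh b` into
`2 cosh s cosh t`, and integrating out `t` gives the product formula
`K_μ(z) K_ν(z) = 2 ∫₀^∞ K_{μ+ν}(2z cosh s) cosh((μ - ν) s) ds`; take `μ = ν = ½`.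
The closed form `K_{1/2}(z) = √(π / 2z) e^{-z}` comes from the substitution `u = sinh (t / 2)`,
which reduces it to a Gaussian integral.
-/

open MeasureTheory Real

/-- Modified Bessel function of the second kind, integral representation. -/
noncomputable def besselK (ν z : ℝ) : ℝ :=
  ∫ t in Set.Ioi (0:ℝ), Real.exp (-z * Real.cosh t) * Real.cosh (ν * t)

open Set

section LinearChangeOfVariables

variable {E F : Type*} [NormedAddCommGroup E] [NormedSpace ℝ E] [MeasurableSpace E] [BorelSpace E]
  [FiniteDimensional ℝ E] (μ : Measure E) [μ.IsAddHaarMeasure] [NormedAddCommGroup F]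
  {f : E →ₗ[ℝ] E}

theorem integral_comp_linearMap [NormedSpace ℝ F] (hf : LinearMap.det f ≠ 0) (g : E → F) :
    ∫ x, g (f x) ∂μ = |LinearMap.det f|⁻¹ • ∫ x, g x ∂μ := by
  let e := (f.equivOfDetNeZero hf).toContinuousLinearEquiv.toHomeomorph.toMeasurableEquiv
  have he : Measure.map e μ = ENNReal.ofReal |(LinearMap.det f)⁻¹| • μ :=
    Measure.map_linearMap_addHaar_eq_smul_addHaar μ hf
  change ∫ x, g (e x) ∂μ = _
  rw [← integral_map_equiv e, he, integral_smul_measure, ENNReal.toReal_ofReal (abs_nonneg _),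
    abs_inv]

theorem MeasureTheory.Integrable.comp_linearMap (hf : LinearMap.det f ≠ 0) {g : E → F}
    (hg : Integrable g μ) : Integrable (fun x => g (f x)) μ := by
  let e := (f.equivOfDetNeZero hf).toContinuousLinearEquiv.toHomeomorph.toMeasurableEquiv
  have he : Measure.map e μ = ENNReal.ofReal |(LinearMap.det f)⁻¹| • μ :=
    Measure.map_linearMap_addHaar_eq_smul_addHaar μ hf
  exact (integrable_map_equiv e g).1 (he ▸ hg.smul_measure ENNReal.ofReal_ne_top)

end LinearChangeOfVariables

theorem one_add_sq_div_four_le_cosh (t : ℝ) : 1 + t ^ 2 / 4 ≤ cosh t := by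
  rw [← cosh_abs, cosh_eq, ← sq_abs]
  have h₁ := quadratic_le_exp_of_nonneg (abs_nonneg t)
  have h₂ := add_one_le_exp (-|t|)
  nlinarith [sq_nonneg |t|]

theorem integrable_exp_neg_mul_cosh_mul_exp {z : ℝ} (hz : 0 < z) (ν : ℝ) :
    Integrable fun t => exp (-z * cosh t) * exp (ν * t) := by
  -- `cosh t ≥ 1 + t²/4` gives a Gaussian majorant after completing the square.
  have hgauss : Integrable fun t => exp (ν ^ 2 / z) * exp (-(z / 4) * (t - 2 * ν / z) ^ 2) :=
    ((integrable_exp_neg_mul_sq (by positivity)).comp_sub_right _).const_mul _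
  refine hgauss.mono' (by fun_prop) (ae_of_all _ fun t => ?_)
  rw [norm_of_nonneg (by positivity), ← exp_add, ← exp_add, exp_le_exp]
  have := one_add_sq_div_four_le_cosh t
  have : -(z / 4) * (t - 2 * ν / z) ^ 2 = -(z / 4) * t ^ 2 + ν * t - ν ^ 2 / z := by
    field_simp; ring
  nlinarith

theorem integral_mul_exp_eq_two_mul_integral_Ioi_mul_cosh {h : ℝ → ℝ} (heven : ∀ t, h (-t) = h t)
    {c : ℝ} (hint : Integrable fun t => h t * exp (c * t)) :
    ∫ t, h t * exp (c * t) = 2 * ∫ t in Ioi 0, h t * cosh (c * t) := by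
  have hneg : ∫ t, h t * exp (-(c * t)) = ∫ t, h t * exp (c * t) := by
    simpa [heven] using integral_neg_eq_self (fun t => h t * exp (c * t)) volume
  have hint' : Integrable fun t => h t * exp (-(c * t)) := by
    simpa [heven] using hint.comp_neg
  calc ∫ t, h t * exp (c * t)
      = ∫ t, h t * cosh (c * t) := by
        simp only [cosh_eq, mul_div_assoc', mul_add, add_div]
        rw [integral_add (hint.div_const 2) (hint'.div_const 2), integral_div, integral_div, hneg]
        ring
    _ = ∫ t, h |t| * cosh (c * |t|) := by
        congr 1 with t
        rcases abs_choice t with ht | ht <;> simp [ht, heven]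
    _ = 2 * ∫ t in Ioi 0, h t * cosh (c * t) :=
        integral_comp_abs (f := fun t => h t * cosh (c * t))

theorem integral_exp_neg_mul_cosh_mul_exp {z : ℝ} (hz : 0 < z) (ν : ℝ) :
    ∫ t, exp (-z * cosh t) * exp (ν * t) = 2 * besselK ν z :=
  integral_mul_exp_eq_two_mul_integral_Ioi_mul_cosh (fun t => by rw [cosh_neg])
    (integrable_exp_neg_mul_cosh_mul_exp hz ν)

noncomputable def sumDiffLinearMap : ℝ × ℝ →ₗ[ℝ] ℝ × ℝ :=
  Matrix.toLin (Module.Basis.finTwoProd ℝ) (Module.Basis.finTwoProd ℝ) !![1, 1; -1, 1]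

theorem sumDiffLinearMap_apply (x : ℝ × ℝ) : sumDiffLinearMap x = (x.1 + x.2, -x.1 + x.2) := by
  simp [sumDiffLinearMap, Matrix.toLin_apply, Matrix.mulVec, dotProduct, Fin.sum_univ_two]

theorem det_sumDiffLinearMap : LinearMap.det sumDiffLinearMap = 2 := by
  rw [sumDiffLinearMap, LinearMap.det_toLin, Matrix.det_fin_two_of]; norm_num

theorem besselK_mul_besselK {z : ℝ} (hz : 0 < z) (μ ν : ℝ) :
    besselK μ z * besselK ν z
      = 2 * ∫ s in Ioi 0, besselK (μ + ν) (2 * z * cosh s) * cosh ((μ - ν) * s) := by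
  set g : ℝ × ℝ → ℝ := fun x =>
    exp (-z * cosh x.1) * exp (μ * x.1) * (exp (-z * cosh x.2) * exp (ν * x.2))
  have hg : Integrable g := by
    rw [Measure.volume_eq_prod]
    exact (integrable_exp_neg_mul_cosh_mul_exp hz μ).mul_prod
      (integrable_exp_neg_mul_cosh_mul_exp hz ν)
  have hdet : LinearMap.det sumDiffLinearMap ≠ 0 := by rw [det_sumDiffLinearMap]; norm_num
  have hgL := hg.comp_linearMap volume hdet
  rw [Measure.volume_eq_prod] at hgL
  have hinner : ∀ s, ∫ t, g (sumDiffLinearMap (s, t))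
      = 2 * besselK (μ + ν) (2 * z * cosh s) * exp ((μ - ν) * s) := by
    intro s
    have hsplit : ∀ t, g (sumDiffLinearMap (s, t))
        = exp ((μ - ν) * s) * (exp (-(2 * z * cosh s) * cosh t) * exp ((μ + ν) * t)) := by
      intro t
      simp only [g, sumDiffLinearMap_apply, ← exp_add, cosh_add, cosh_neg, sinh_neg]
      ring_nf
    simp only [hsplit]
    rw [integral_const_mul, integral_exp_neg_mul_cosh_mul_exp (by positivity)]
    ring
  have houter : Integrable fun s => 2 * besselK (μ + ν) (2 * z * cosh s) * exp ((μ - ν) * s) := by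
    simpa only [hinner] using hgL.integral_prod_left
  calc besselK μ z * besselK ν z
      = (∫ x, g x) / 4 := by
        rw [Measure.volume_eq_prod, integral_prod_mul (fun a => exp (-z * cosh a) * exp (μ * a))
          (fun b => exp (-z * cosh b) * exp (ν * b)), integral_exp_neg_mul_cosh_mul_exp hz,
          integral_exp_neg_mul_cosh_mul_exp hz]
        ring
    _ = (∫ x, g (sumDiffLinearMap x)) / 2 := by
        rw [integral_comp_linearMap volume hdet, det_sumDiffLinearMap, smul_eq_mul]
        norm_num; ring
    _ = (∫ s, 2 * besselK (μ + ν) (2 * z * cosh s) * exp ((μ - ν) * s)) / 2 := by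
        rw [Measure.volume_eq_prod, integral_prod _ hgL]
        simp only [hinner]
    _ = 2 * ∫ s in Ioi 0, besselK (μ + ν) (2 * z * cosh s) * cosh ((μ - ν) * s) := by
        rw [integral_mul_exp_eq_two_mul_integral_Ioi_mul_cosh (fun s => by rw [cosh_neg]) houter]
        simp only [mul_assoc, integral_const_mul]
        ring

-- For `z ≤ 0` both sides are junk zeros: the integral diverges and `√(π / (2 * z)) = 0`.
theorem besselK_one_half (z : ℝ) :
    besselK (1 / 2) z = sqrt (π / (2 * z)) * exp (-z) := by
  have himage : (fun t => sinh (t / 2)) '' Ioi 0 = Ioi 0 := by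
    ext u
    constructor
    · rintro ⟨t, ht, rfl⟩
      exact sinh_pos_iff.2 (half_pos ht)
    · intro hu
      exact ⟨2 * arsinh u, by simpa using hu, by simp⟩
  have hderiv : ∀ t ∈ Ioi (0 : ℝ),
      HasDerivWithinAt (fun t => sinh (t / 2)) (cosh (t / 2) * (1 / 2)) (Ioi 0) t :=
    fun t _ => ((hasDerivAt_id t).div_const 2).sinh.hasDerivWithinAt
  have hinj : InjOn (fun t => sinh (t / 2)) (Ioi 0) := fun a _ b _ h => by
    simpa using sinh_injective h
  have hsubst := integral_image_eq_integral_abs_deriv_smul measurableSet_Ioi hderiv hinj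
    fun u => 2 * exp (-z * (1 + 2 * u ^ 2))
  rw [himage] at hsubst
  calc besselK (1 / 2) z = ∫ u in Ioi 0, 2 * exp (-z * (1 + 2 * u ^ 2)) := by
        rw [hsubst]
        refine setIntegral_congr_fun measurableSet_Ioi fun t _ => ?_
        have hcosh : cosh t = 1 + 2 * sinh (t / 2) ^ 2 := by
          have := cosh_two_mul (t / 2)
          rw [mul_div_cancel₀ t two_ne_zero, cosh_sq] at this
          linarith
        rw [abs_of_pos (by positivity), smul_eq_mul, ← hcosh]
        ring_nf
    _ = 2 * exp (-z) * ∫ u in Ioi 0, exp (-(2 * z) * u ^ 2) := by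
        rw [← integral_const_mul]
        congr with u
        rw [mul_assoc, ← exp_add]
        ring_nf
    _ = sqrt (π / (2 * z)) * exp (-z) := by
        rw [integral_gaussian_Ioi]; ring

theorem integral_besselK_one_cosh (z : ℝ) (hz : 0 < z) :
    (∫ t in Set.Ioi (0:ℝ), besselK 1 (2 * z * Real.cosh t))
        = (1 / 2) * (besselK (1/2) z) ^ 2 ∧
      (1 / 2) * (besselK (1/2) z) ^ 2 = (π / (4 * z)) * Real.exp (-2 * z) := by
  have hsquare : besselK (1 / 2) z ^ 2 = 2 * ∫ t in Ioi 0, besselK 1 (2 * z * cosh t) := by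
    have := besselK_mul_besselK hz (1 / 2) (1 / 2)
    norm_num at this
    rw [sq, this]
  constructor
  · rw [hsquare]; ring
  · rw [besselK_one_half z, mul_pow, sq_sqrt (by positivity), ← exp_nat_mul]
    field_simp
    ring_nf
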